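/- arXiv:2504.21551 — 6 statements merged into one kernel-verified Lean document; each statement's English description precedes it below -/
import Mathlib

section
/- Let a < b be real numbers. Then the closed interval [a,b] ⊆ ℝ, equipped with the midpoint operation x ⊕ y = (x+y)/2 and the two points a and b, is an interval object in the category of sets: (1) ([a,b], ⊕) is a cancellative iterative midpoint set, and (2) for every cancellative iterative midpoint set (A, m) and every pair of points x, y ∈ A there is a unique midpoint homomorphism h : [a,b] → A with h(a) = x and h(b) = y. -/
/-- A midpoint operation: idempotent, commutative, satisfying transposition. -/
def IsMidpoint {A : Type} (m : A → A → A) : Prop :=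
  (∀ x, m x x = x) ∧ (∀ x y, m x y = m y x) ∧
    (∀ x y z w, m (m x y) (m z w) = m (m x z) (m y w))

/-- Cancellation: `m x y = m x z` implies `y = z`. -/
def Cancellative {A : Type} (m : A → A → A) : Prop :=
  ∀ x y z, m x y = m x z → y = z

/-- Iterativity in the category of sets. -/
def Iterative {A : Type} (m : A → A → A) : Prop :=
  ∀ (X : Type) (c : X → A × X), ∃! u : X → A, ∀ x, u x = m (c x).1 (u (c x).2)

/-- The midpoint operation `x ⊕ y = (x+y)/2` on the closed interval `[a,b]`. -/
noncomputable def iccMid (a b : ℝ) (x y : Set.Icc a b) : Set.Icc a b :=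
  ⟨(x.1 + y.1) / 2,
    ⟨by have h1 := x.2.1; have h2 := y.2.1; linarith,
     by have h1 := x.2.2; have h2 := y.2.2; linarith⟩⟩

/-!
On `[a,b]` the midpoint iteration `u x = (c₁ x + u (c₂ x)) / 2` is solved by the binary series
`∑ₙ c₁ (c₂ⁿ x) / 2ⁿ⁺¹`, and by no other map into `[a,b]`: the difference of two solutions halves along
`c₂` while staying bounded by `b - a`. For the universal property, write `t ∈ [a,b]` as `a ⊕ T t` or `b ⊕ T t`, where `T` is
the doubling map; the homomorphism is the solution of `h t = m (x or y) (h (T t))` in `A`. It sends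
`a ↦ x` and `b ↦ y` because `a` and `b` are fixed points of `T`. That `(s, t) ↦ h (s ⊕ t)` and
`(s, t) ↦ m (h s) (h t)` agree follows from uniqueness, because both solve one iteration on
`[a,b] × [a,b]`.
-/

section MidpointSet

variable {A : Type} {m : A → A → A}

theorem IsMidpoint.left_distrib (hm : IsMidpoint m) (x y z : A) :
    m x (m y z) = m (m x y) (m x z) := by
  obtain ⟨hidem, -, htrans⟩ := hm
  rw [← htrans, hidem]

theorem Iterative.eq_of_isSolution (hit : Iterative m) {X : Type} (c : X → A × X) {p q : X → A}
    (hp : ∀ x, p x = m (c x).1 (p (c x).2)) (hq : ∀ x, q x = m (c x).1 (q (c x).2)) : p = q :=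
  (hit X c).unique hp hq

theorem Iterative.eq_of_eq_mid (hit : Iterative m) (hidem : ∀ x, m x x = x) {w z : A}
    (h : z = m w z) : z = w :=
  congrFun (hit.eq_of_isSolution (fun _ : Unit => (w, ())) (fun _ => h) (fun _ => (hidem w).symm)) ()

end MidpointSet

section BinarySeries

variable {a b : ℝ} {f : ℕ → ℝ}

theorem summable_div_two_div_two_pow (hf : ∀ n, f n ∈ Set.Icc a b) :
    Summable fun n => f n / 2 / 2 ^ n := by
  refine Summable.of_norm_bounded (summable_geometric_two' (max |a| |b|)) fun n => ?_
  rw [Real.norm_eq_abs, abs_div, abs_div, abs_two, abs_pow, abs_two]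
  gcongr
  exact abs_le_max_abs_abs (hf n).1 (hf n).2

theorem tsum_div_two_div_two_pow_mem_Icc (hf : ∀ n, f n ∈ Set.Icc a b) :
    ∑' n, f n / 2 / 2 ^ n ∈ Set.Icc a b := by
  have hs := summable_div_two_div_two_pow hf
  constructor
  · calc a = ∑' n : ℕ, a / 2 / 2 ^ n := (tsum_geometric_two' a).symm
      _ ≤ ∑' n, f n / 2 / 2 ^ n :=
        Summable.tsum_le_tsum (fun n => by gcongr; exact (hf n).1) (summable_geometric_two' a) hs
  · calc ∑' n, f n / 2 / 2 ^ n ≤ ∑' n : ℕ, b / 2 / 2 ^ n :=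
          Summable.tsum_le_tsum (fun n => by gcongr; exact (hf n).2) hs (summable_geometric_two' b)
      _ = b := tsum_geometric_two' b

theorem tsum_div_two_div_two_pow_eq_mid (hf : ∀ n, f n ∈ Set.Icc a b) :
    ∑' n, f n / 2 / 2 ^ n = (f 0 + ∑' n, f (n + 1) / 2 / 2 ^ n) / 2 := by
  have hshift : ∀ n, f (n + 1) / 2 / 2 ^ (n + 1) = f (n + 1) / 2 / 2 ^ n / 2 := fun n => by
    rw [pow_succ]; ring
  rw [(summable_div_two_div_two_pow hf).tsum_eq_zero_add, tsum_congr hshift, tsum_div_const]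
  ring

end BinarySeries

theorem eq_zero_of_eq_half_comp {X : Type} (S : X → X) {d : X → ℝ} {C : ℝ} (hC : ∀ x, |d x| ≤ C)
    (hd : ∀ x, d x = d (S x) / 2) (x : X) : d x = 0 := by
  have hpow : ∀ n x, |d x| * 2 ^ n ≤ C := by
    intro n
    induction n with
    | zero => simpa using hC
    | succ n ih =>
      intro x
      rw [hd, abs_div, abs_two, pow_succ]
      linarith [ih (S x)]
  by_contra hx
  have hpos : 0 < |d x| := abs_pos.mpr hx
  obtain ⟨n, hn⟩ := pow_unbounded_of_one_lt (C / |d x|) one_lt_two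
  rw [div_lt_iff₀ hpos] at hn
  linarith [hpow n x]

section Interval

variable {a b : ℝ}

@[simp]
theorem coe_iccMid (s t : Set.Icc a b) : (iccMid a b s t : ℝ) = (s + t) / 2 := rfl

theorem isMidpoint_iccMid : IsMidpoint (iccMid a b) := by
  refine ⟨fun t => ?_, fun s t => ?_, fun s t p q => ?_⟩ <;> ext <;> simp only [coe_iccMid] <;> ring

theorem cancellative_iccMid : Cancellative (iccMid a b) := by
  intro s t p h
  ext
  have := congrArg Subtype.val h
  simp only [coe_iccMid] at this
  linarith

theorem iterative_iccMid : Iterative (iccMid a b) := by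
  intro X c
  set S : X → X := fun x => (c x).2
  set digits : X → ℕ → ℝ := fun x n => (c (S^[n] x)).1
  have hdigits : ∀ x n, digits x n ∈ Set.Icc a b := fun x n => (c (S^[n] x)).1.2
  set U : X → Set.Icc a b := fun x =>
    ⟨∑' n, digits x n / 2 / 2 ^ n, tsum_div_two_div_two_pow_mem_Icc (hdigits x)⟩
  -- `S^[n + 1] x` unfolds to `S^[n] (S x)`, so the shifted series is the one defining `U (S x)`.
  have hU : ∀ x, (U x : ℝ) = ((c x).1 + U (c x).2) / 2 := fun x =>
    tsum_div_two_div_two_pow_eq_mid (hdigits x)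
  refine ⟨U, fun x => Subtype.ext (hU x), fun v hv => funext fun x => Subtype.ext ?_⟩
  refine sub_eq_zero.mp (eq_zero_of_eq_half_comp S (d := fun x => (v x : ℝ) - U x) (C := b - a)
    (fun x => ?_) (fun x => ?_) x)
  · obtain ⟨hv₁, hv₂⟩ := (v x).2
    obtain ⟨hU₁, hU₂⟩ := (U x).2
    exact abs_sub_le_iff.mpr ⟨by linarith, by linarith⟩
  · simp only [congrArg Subtype.val (hv x), coe_iccMid, hU x]
    ring

end Interval

section Doubling

variable {a b : ℝ}

noncomputable def iccDouble (t : Set.Icc a b) : Set.Icc a b :=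
  if h : (t : ℝ) ≤ (a + b) / 2 then
    ⟨2 * t - a, by obtain ⟨h₁, h₂⟩ := t.2; constructor <;> linarith⟩
  else
    ⟨2 * t - b, by obtain ⟨h₁, h₂⟩ := t.2; constructor <;> linarith [not_le.mp h]⟩

theorem coe_iccDouble_of_le {t : Set.Icc a b} (ht : (t : ℝ) ≤ (a + b) / 2) :
    (iccDouble t : ℝ) = 2 * t - a := by
  rw [iccDouble, dif_pos ht]

theorem coe_iccDouble_of_lt {t : Set.Icc a b} (ht : (a + b) / 2 < t) :
    (iccDouble t : ℝ) = 2 * t - b := by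
  rw [iccDouble, dif_neg ht.not_ge]

theorem iccMid_iccDouble_of_le {p t : Set.Icc a b} (hp : (p : ℝ) = a)
    (ht : (t : ℝ) ≤ (a + b) / 2) : iccMid a b p (iccDouble t) = t := by
  ext
  rw [coe_iccMid, coe_iccDouble_of_le ht, hp]
  ring

theorem iccMid_iccDouble_of_lt {p t : Set.Icc a b} (hp : (p : ℝ) = b)
    (ht : (a + b) / 2 < t) : iccMid a b p (iccDouble t) = t := by
  ext
  rw [coe_iccMid, coe_iccDouble_of_lt ht, hp]
  ring

variable {A : Type}

noncomputable def iccDigit (x y : A) (t : Set.Icc a b) : A :=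
  if (t : ℝ) ≤ (a + b) / 2 then x else y

theorem iccDigit_of_le {x y : A} {t : Set.Icc a b} (ht : (t : ℝ) ≤ (a + b) / 2) :
    iccDigit x y t = x :=
  if_pos ht

theorem iccDigit_of_lt {x y : A} {t : Set.Icc a b} (ht : (a + b) / 2 < t) :
    iccDigit x y t = y :=
  if_neg ht.not_ge

def IsDoublingSolution (m : A → A → A) (x y : A) (u : Set.Icc a b → A) : Prop :=
  ∀ t, u t = m (iccDigit x y t) (u (iccDouble t))

namespace IsDoublingSolution

variable {m : A → A → A} {x y : A} {u : Set.Icc a b → A}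

theorem apply_of_le (hu : IsDoublingSolution m x y u) {t : Set.Icc a b}
    (ht : (t : ℝ) ≤ (a + b) / 2) : u t = m x (u (iccDouble t)) := by
  rw [hu t, iccDigit_of_le ht]

theorem apply_of_lt (hu : IsDoublingSolution m x y u) {t : Set.Icc a b}
    (ht : (a + b) / 2 < t) : u t = m y (u (iccDouble t)) := by
  rw [hu t, iccDigit_of_lt ht]

theorem apply_left (hu : IsDoublingSolution m x y u) (hm : IsMidpoint m) (hit : Iterative m)
    (hab : a ≤ b) : u ⟨a, Set.left_mem_Icc.mpr hab⟩ = x := by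
  have hle : a ≤ (a + b) / 2 := by linarith
  refine hit.eq_of_eq_mid hm.1 ?_
  conv_lhs => rw [hu.apply_of_le hle]
  congr 2
  ext
  rw [coe_iccDouble_of_le hle]
  ring

theorem apply_right (hu : IsDoublingSolution m x y u) (hm : IsMidpoint m) (hit : Iterative m)
    (hab : a < b) : u ⟨b, Set.right_mem_Icc.mpr hab.le⟩ = y := by
  have hlt : (a + b) / 2 < b := by linarith
  refine hit.eq_of_eq_mid hm.1 ?_
  conv_lhs => rw [hu.apply_of_lt hlt]
  congr 2
  ext
  rw [coe_iccDouble_of_lt hlt]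
  ring

theorem apply_iccMid_of_le_of_lt (hu : IsDoublingSolution m x y u) (hm : IsMidpoint m)
    {s t : Set.Icc a b} (hs : (s : ℝ) ≤ (a + b) / 2) (ht : (a + b) / 2 < t) :
    u (iccMid a b s t) = m (m x y) (u (iccMid a b (iccDouble s) (iccDouble t))) := by
  -- Two doubling steps, with digits `x` and `y` in some order, take `s ⊕ t` to `iccDouble r`.
  set r := iccMid a b (iccDouble s) (iccDouble t)
  have hr : (r : ℝ) = s + t - (a + b) / 2 := by
    simp only [r, coe_iccMid, coe_iccDouble_of_le hs, coe_iccDouble_of_lt ht]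
    ring
  obtain ⟨hs₁, -⟩ := s.2
  obtain ⟨-, ht₂⟩ := t.2
  set p := iccMid a b s t
  have hp : (p : ℝ) = (s + t) / 2 := coe_iccMid s t
  rcases le_or_gt (r : ℝ) ((a + b) / 2) with hr_le | hr_gt
  · have hp_le : (p : ℝ) ≤ (a + b) / 2 := by linarith
    have hTp : (a + b) / 2 < (iccDouble p : ℝ) := by rw [coe_iccDouble_of_le hp_le]; linarith
    have hTTp : iccDouble (iccDouble p) = iccDouble r := by
      ext
      rw [coe_iccDouble_of_lt hTp, coe_iccDouble_of_le hp_le, coe_iccDouble_of_le hr_le]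
      linarith
    rw [hu.apply_of_le hp_le, hu.apply_of_lt hTp, hTTp, hu.apply_of_le hr_le, hm.left_distrib]
  · have hp_gt : (a + b) / 2 < (p : ℝ) := by linarith
    have hTp : (iccDouble p : ℝ) ≤ (a + b) / 2 := by rw [coe_iccDouble_of_lt hp_gt]; linarith
    have hTTp : iccDouble (iccDouble p) = iccDouble r := by
      ext
      rw [coe_iccDouble_of_le hTp, coe_iccDouble_of_lt hp_gt, coe_iccDouble_of_lt hr_gt]
      linarith
    rw [hu.apply_of_lt hp_gt, hu.apply_of_le hTp, hTTp, hu.apply_of_lt hr_gt, hm.2.1 x y,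
      hm.left_distrib]

theorem apply_iccMid (hu : IsDoublingSolution m x y u) (hm : IsMidpoint m) (s t : Set.Icc a b) :
    u (iccMid a b s t) =
      m (m (iccDigit x y s) (iccDigit x y t)) (u (iccMid a b (iccDouble s) (iccDouble t))) := by
  rcases le_or_gt (s : ℝ) ((a + b) / 2) with hs | hs <;>
    rcases le_or_gt (t : ℝ) ((a + b) / 2) with ht | ht <;>
    simp only [iccDigit_of_le, iccDigit_of_lt, hs, ht]
  · have hst : (iccMid a b s t : ℝ) ≤ (a + b) / 2 := by rw [coe_iccMid]; linarith
    rw [hm.1, hu.apply_of_le hst]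
    congr 2
    ext
    simp only [coe_iccMid, coe_iccDouble_of_le hst, coe_iccDouble_of_le hs, coe_iccDouble_of_le ht]
    ring
  · exact hu.apply_iccMid_of_le_of_lt hm hs ht
  · rw [isMidpoint_iccMid.2.1 s t, isMidpoint_iccMid.2.1 (iccDouble s), hm.2.1 y x]
    exact hu.apply_iccMid_of_le_of_lt hm ht hs
  · have hst : (a + b) / 2 < (iccMid a b s t : ℝ) := by rw [coe_iccMid]; linarith
    rw [hm.1, hu.apply_of_lt hst]
    congr 2
    ext
    simp only [coe_iccMid, coe_iccDouble_of_lt hst, coe_iccDouble_of_lt hs, coe_iccDouble_of_lt ht]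
    ring

theorem map_iccMid (hu : IsDoublingSolution m x y u) (hm : IsMidpoint m) (hit : Iterative m)
    (s t : Set.Icc a b) : u (iccMid a b s t) = m (u s) (u t) := by
  have key := hit.eq_of_isSolution
    (fun p : Set.Icc a b × Set.Icc a b =>
      (m (iccDigit x y p.1) (iccDigit x y p.2), (iccDouble p.1, iccDouble p.2)))
    (p := fun p => u (iccMid a b p.1 p.2)) (q := fun p => m (u p.1) (u p.2))
    (fun p => hu.apply_iccMid hm p.1 p.2)
    (fun p => by dsimp only; rw [hu p.1, hu p.2, hm.2.2])
  exact congrFun key (s, t)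

theorem of_map_iccMid (hab : a ≤ b) (hu : ∀ s t, u (iccMid a b s t) = m (u s) (u t))
    (hx : u ⟨a, Set.left_mem_Icc.mpr hab⟩ = x) (hy : u ⟨b, Set.right_mem_Icc.mpr hab⟩ = y) :
    IsDoublingSolution m x y u := by
  intro t
  rcases le_or_gt (t : ℝ) ((a + b) / 2) with ht | ht
  · conv_lhs => rw [← iccMid_iccDouble_of_le (p := ⟨a, Set.left_mem_Icc.mpr hab⟩) rfl ht]
    rw [hu, hx, iccDigit_of_le ht]
  · conv_lhs => rw [← iccMid_iccDouble_of_lt (p := ⟨b, Set.right_mem_Icc.mpr hab⟩) rfl ht]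
    rw [hu, hy, iccDigit_of_lt ht]

end IsDoublingSolution

theorem existsUnique_iccMid_hom (hab : a < b) {m : A → A → A} (hm : IsMidpoint m)
    (hit : Iterative m) (x y : A) :
    ∃! h : Set.Icc a b → A, (∀ s t, h (iccMid a b s t) = m (h s) (h t)) ∧
      h ⟨a, Set.left_mem_Icc.mpr hab.le⟩ = x ∧ h ⟨b, Set.right_mem_Icc.mpr hab.le⟩ = y := by
  obtain ⟨u, hu, huniq⟩ := hit (Set.Icc a b) fun t => (iccDigit x y t, iccDouble t)
  have hu : IsDoublingSolution m x y u := hu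
  refine ⟨u, ⟨hu.map_iccMid hm hit, hu.apply_left hm hit hab.le, hu.apply_right hm hit hab⟩, ?_⟩
  rintro h ⟨hh, hx, hy⟩
  exact huniq h (IsDoublingSolution.of_map_iccMid hab.le hh hx hy)

end Doubling

/-- `([a,b], ⊕, a, b)` is an interval object in the category of sets. -/
theorem interval_object_in_Set (a b : ℝ) (hab : a < b) :
    IsMidpoint (iccMid a b) ∧ Cancellative (iccMid a b) ∧ Iterative (iccMid a b) ∧
    ∀ (A : Type) (m : A → A → A), IsMidpoint m → Cancellative m → Iterative m →
      ∀ x y : A, ∃! h : Set.Icc a b → A,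
        (∀ u v, h (iccMid a b u v) = m (h u) (h v)) ∧
        h ⟨a, Set.left_mem_Icc.mpr hab.le⟩ = x ∧
        h ⟨b, Set.right_mem_Icc.mpr hab.le⟩ = y :=
  ⟨isMidpoint_iccMid, cancellative_iccMid, iterative_iccMid,
    fun _ _ hm _ hit x y => existsUnique_iccMid_hom hab hm hit x y⟩
end

section
/- For every set X, the set FX = { w : X → [0,1] | w has countable support and Σ_{x∈X} w(x) = 1 }, equipped with the pointwise superconvex combinations (Σ'ᵢ λᵢ·wᵢ)(x) = Σᵢ λᵢ · wᵢ(x), is the free superconvex set over X with insertion of generators η(x) = (y ↦ δ_{xy}): for every superconvex set Y and every function f : X → Y there is a unique superaffine map h : FX → Y with f = h ∘ η. Moreover, FX is cancellative (and hence iterative). -/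
/-- A superconvex weight: a nonnegative sequence summing to 1. -/
def IsWeight (lam : ℕ → ℝ) : Prop := (∀ i, 0 ≤ lam i) ∧ ∑' i, lam i = 1

/-- A superconvex structure on `X`: an operation of countable convex combination,
satisfying the projection and composition laws (on genuine weights). -/
structure SuperconvexStr (X : Type) where
  comb : (ℕ → ℝ) → (ℕ → X) → X
  proj : ∀ lam, IsWeight lam → ∀ k, lam k = 1 → (∀ i, i ≠ k → lam i = 0) →
    ∀ x, comb lam x = x k
  compos : ∀ lam, IsWeight lam → ∀ mu : ℕ → ℕ → ℝ, (∀ i, IsWeight (mu i)) →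
    ∀ x : ℕ → X, comb lam (fun i => comb (mu i) x) = comb (fun j => ∑' i, lam i * mu i j) x

/-- The binary combination `λ·x + (1-λ)·y`. -/
def SuperconvexStr.pair {X : Type} (S : SuperconvexStr X) (lam : ℝ) (x y : X) : X :=
  S.comb (fun i => if i = 0 then lam else if i = 1 then 1 - lam else 0)
    (fun i => if i = 0 then x else y)

/-- Cancellativity of a superconvex structure. -/
def SuperconvexStr.Cancellative {X : Type} (S : SuperconvexStr X) : Prop :=
  ∀ lam : ℝ, 0 < lam → lam < 1 → ∀ x y z : X, S.pair lam x z = S.pair lam y z → x = y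

/-- Iterativity of a superconvex structure. -/
def SuperconvexStr.Iterative {X : Type} (S : SuperconvexStr X) : Prop :=
  ∀ (x y : ℕ → X) (lam mu : ℕ → ℝ),
    (∀ i, 0 < lam i ∧ lam i < 1) → (∀ i, 0 < mu i ∧ mu i < 1) →
    (∀ i, lam i + mu i = 1) →
    (∀ i, x i = S.pair (lam i) (y i) (x (i + 1))) →
    Filter.Tendsto (fun n => ∏ j ∈ Finset.range n, mu j) Filter.atTop (nhds 0) →
    x 0 = S.comb (fun i => lam i * ∏ j ∈ Finset.range i, mu j) y

/-- The underlying set of the free superconvex set over `X`: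
functions `X → [0,1]` with countable support and total sum 1. -/
def FreeSC (X : Type) : Set (X → ℝ) :=
  {w | (∀ x, 0 ≤ w x ∧ w x ≤ 1) ∧ (Function.support w).Countable ∧ ∑' x, w x = 1}

open Classical in
/-- The insertion of generators `η(x) = (y ↦ δ_{xy})`. -/
noncomputable def etaFree {X : Type} (x : X) : FreeSC X :=
  ⟨fun y => if y = x then 1 else 0, by
    refine ⟨fun y => ?_, ?_, ?_⟩
    · by_cases h : y = x <;> simp [h]
    · exact (Set.countable_singleton x).mono
        (Function.support_subset_iff.mpr fun y hy => by
          by_contra h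
          exact hy (if_neg h))
    · have : (∑' y : X, if y = x then (1 : ℝ) else 0) = if x = x then (1 : ℝ) else 0 :=
        tsum_eq_single x fun y hy => if_neg hy
      rw [if_pos rfl] at this
      exact this⟩

/-- Superaffine maps between superconvex sets. -/
def IsSuperaffine {X Y : Type} (S : SuperconvexStr X) (T : SuperconvexStr Y)
    (f : X → Y) : Prop :=
  ∀ lam, IsWeight lam → ∀ x : ℕ → X, f (S.comb lam x) = T.comb lam (fun i => f (x i))

/-!
Countable combinations of nonnegative weights can be summed in either order, so the pointwise
combinations stay in `FreeSC X` and satisfy the composition law; cancellativity and iterativity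
are then pointwise statements about real series, the latter by telescoping the recursion.

For freeness, every `w` is the combination of the point masses `etaFree (e j)` along any
enumeration `e` of a superset of its support, which forces the extension. It is well defined
because the composition law applied to the Dirac weights `Pi.single (σ i) 1` transports a
combination along any reindexing `σ : ℕ → ℕ`, turning one enumeration into another; it is
superaffine because countably many supports can be enumerated simultaneously.
-/

open Function Set Filter Topology

section WeightedSums
variable {β γ : Type*}

lemma summable_of_tsum_eq_one {f : β → ℝ} (h : ∑' b, f b = 1) : Summable f := by
  by_contra hf
  rw [tsum_eq_zero_of_not_summable hf] at h
  exact zero_ne_one h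

lemma IsWeight.summable {lam : ℕ → ℝ} (h : IsWeight lam) : Summable lam :=
  summable_of_tsum_eq_one h.2

lemma summable_mul_of_mem_Icc {lam a : β → ℝ} (hlam : ∀ b, 0 ≤ lam b) (hs : Summable lam)
    (ha : ∀ b, 0 ≤ a b ∧ a b ≤ 1) : Summable fun b => lam b * a b :=
  hs.of_nonneg_of_le (fun b => mul_nonneg (hlam b) (ha b).1)
    fun b => mul_le_of_le_one_right (hlam b) (ha b).2

lemma tsum_mul_le_tsum {lam a : β → ℝ} (hlam : ∀ b, 0 ≤ lam b) (hs : Summable lam)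
    (ha : ∀ b, 0 ≤ a b ∧ a b ≤ 1) : ∑' b, lam b * a b ≤ ∑' b, lam b :=
  (summable_mul_of_mem_Icc hlam hs ha).tsum_le_tsum
    (fun b => mul_le_of_le_one_right (hlam b) (ha b).2) hs

lemma tsum_mul_tsum_comm {lam : β → ℝ} {g : β → γ → ℝ} (hlam : ∀ b, 0 ≤ lam b)
    (hs : Summable lam) (hg : ∀ b c, 0 ≤ g b c) (hgs : ∀ b, Summable (g b))
    (hg1 : ∀ b, ∑' c, g b c ≤ 1) :
    ∑' b, lam b * ∑' c, g b c = ∑' c, ∑' b, lam b * g b c := by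
  have hprod : Summable (uncurry fun b c => lam b * g b c) := by
    refine (summable_prod_of_nonneg fun p => mul_nonneg (hlam p.1) (hg p.1 p.2)).2
      ⟨fun b => (hgs b).mul_left (lam b), hs.of_nonneg_of_le
        (fun b => tsum_nonneg fun c => mul_nonneg (hlam b) (hg b c)) fun b => ?_⟩
    change ∑' c, lam b * g b c ≤ lam b
    rw [tsum_mul_left]
    exact mul_le_of_le_one_right (hlam b) (hg1 b)
  simp_rw [← tsum_mul_left]
  exact hprod.tsum_comm.symm

end WeightedSums

lemma isWeight_tsum_mul {lam : ℕ → ℝ} {mu : ℕ → ℕ → ℝ} (hlam : IsWeight lam)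
    (hmu : ∀ i, IsWeight (mu i)) : IsWeight fun j => ∑' i, lam i * mu i j := by
  refine ⟨fun j => tsum_nonneg fun i => mul_nonneg (hlam.1 i) ((hmu i).1 j), ?_⟩
  rw [← tsum_mul_tsum_comm hlam.1 hlam.summable (fun i j => (hmu i).1 j)
    (fun i => (hmu i).summable) fun i => (hmu i).2.le]
  simpa only [(hmu _).2, mul_one] using hlam.2

lemma tsum_pairWeight_mul (l : ℝ) (g : ℕ → ℝ) :
    ∑' i, (if i = 0 then l else if i = 1 then 1 - l else 0) * g i = l * g 0 + (1 - l) * g 1 := by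
  rw [tsum_eq_sum (s := {0, 1}) fun i hi => by simp_all]
  simp

lemma isWeight_pairWeight {l : ℝ} (h0 : 0 ≤ l) (h1 : l ≤ 1) :
    IsWeight fun i => if i = 0 then l else if i = 1 then 1 - l else 0 := by
  refine ⟨fun i => by dsimp only; split_ifs <;> linarith, ?_⟩
  simpa using tsum_pairWeight_mul l 1

lemma hasSum_of_recursion {a b lam mu : ℕ → ℝ} {C : ℝ} (hlam : ∀ i, 0 ≤ lam i)
    (hmu : ∀ i, 0 ≤ mu i) (hb : ∀ i, 0 ≤ b i) (ha : ∀ i, |a i| ≤ C)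
    (hrec : ∀ i, a i = lam i * b i + mu i * a (i + 1))
    (hP : Tendsto (fun n => ∏ j ∈ Finset.range n, mu j) atTop (𝓝 0)) :
    HasSum (fun i => lam i * (∏ j ∈ Finset.range i, mu j) * b i) (a 0) := by
  have hpartial : ∀ n, ∑ i ∈ Finset.range n, lam i * (∏ j ∈ Finset.range i, mu j) * b i
      = a 0 - (∏ j ∈ Finset.range n, mu j) * a n := by
    intro n
    induction n with
    | zero => simp
    | succ n ih => rw [Finset.sum_range_succ, ih, Finset.prod_range_succ, hrec n]; ring
  have htail : Tendsto (fun n => (∏ j ∈ Finset.range n, mu j) * a n) atTop (𝓝 0) :=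
    hP.zero_mul_isBoundedUnder_le (isBoundedUnder_of ⟨C, fun n => ha n⟩)
  rw [hasSum_iff_tendsto_nat_of_nonneg fun i =>
    mul_nonneg (mul_nonneg (hlam i) (Finset.prod_nonneg fun j _ => hmu j)) (hb i)]
  simpa [hpartial] using tendsto_const_nhds.sub htail

lemma IsWeight.exists_ne_zero {lam : ℕ → ℝ} (h : IsWeight lam) : ∃ i, lam i ≠ 0 := by
  by_contra! hzero
  simpa [hzero] using h.2

lemma isWeight_single (k : ℕ) : IsWeight (Pi.single k 1) :=
  ⟨fun i => by by_cases h : i = k <;> simp [h], by simp [Pi.single_apply]⟩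

namespace SuperconvexStr
variable {Y : Type} (T : SuperconvexStr Y)

lemma comb_single (k : ℕ) (z : ℕ → Y) : T.comb (Pi.single k 1) z = z k :=
  T.proj _ (isWeight_single k) k (by simp) (fun i hi => by simp [hi]) z

lemma comb_const {lam : ℕ → ℝ} (hlam : IsWeight lam) (y : Y) :
    T.comb lam (fun _ => y) = y := by
  have h := T.compos lam hlam (fun _ => Pi.single 0 1) (fun _ => isWeight_single 0) fun _ => y
  simp only [comb_single, tsum_mul_right, hlam.2, one_mul] at h
  exact h

lemma comb_comp {lam : ℕ → ℝ} (hlam : IsWeight lam) (σ : ℕ → ℕ) (z : ℕ → Y) :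
    T.comb lam (fun i => z (σ i)) = T.comb (fun j => ∑' i, if σ i = j then lam i else 0) z := by
  have h := T.compos lam hlam (fun i => Pi.single (σ i) 1) (fun i => isWeight_single _) z
  simp only [comb_single, Pi.single_apply, mul_ite, mul_one, mul_zero, eq_comm (b := σ _)] at h
  exact h

lemma comb_congr {lam : ℕ → ℝ} (hlam : IsWeight lam) {z z' : ℕ → Y}
    (h : ∀ i, lam i ≠ 0 → z i = z' i) : T.comb lam z = T.comb lam z' := by
  classical
  obtain ⟨i₀, hi₀⟩ := hlam.exists_ne_zero
  -- redirect the null coordinates to `i₀`, where `z` and `z'` agree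
  let σ : ℕ → ℕ := fun i => if lam i = 0 then i₀ else i
  have hσ : (fun j => ∑' i, if σ i = j then lam i else 0) = lam := by
    funext j
    rw [tsum_eq_single j fun i hij => by by_cases hi : lam i = 0 <;> simp [σ, hi, hij]]
    by_cases hj : lam j = 0 <;> simp [σ, hj]
  have hred : ∀ z : ℕ → Y, T.comb lam z = T.comb lam (fun i => z (σ i)) := fun z => by
    rw [T.comb_comp hlam σ z, hσ]
  rw [hred z, hred z']
  congr 1
  funext i
  by_cases hi : lam i = 0 <;> simp [σ, hi, h, hi₀]

end SuperconvexStr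

namespace FreeSC
variable {X Y : Type}

noncomputable def combFun (lam : ℕ → ℝ) (w : ℕ → FreeSC X) : X → ℝ :=
  fun x => ∑' i, lam i * (w i).1 x

lemma summable (w : FreeSC X) : Summable w.1 := summable_of_tsum_eq_one w.2.2.2

lemma combFun_mem {lam : ℕ → ℝ} (hlam : IsWeight lam) (w : ℕ → FreeSC X) :
    combFun lam w ∈ FreeSC X := by
  refine ⟨fun x => ⟨tsum_nonneg fun i => mul_nonneg (hlam.1 i) ((w i).2.1 x).1, ?_⟩, ?_, ?_⟩
  · exact (tsum_mul_le_tsum hlam.1 hlam.summable fun i => (w i).2.1 x).trans hlam.2.le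
  · refine (Set.countable_iUnion fun i => (w i).2.2.1).mono fun x hx => ?_
    by_contra h
    simp only [Set.mem_iUnion, mem_support, not_exists, not_not] at h
    exact hx (by simp [combFun, h])
  · change ∑' x, ∑' i, lam i * (w i).1 x = 1
    rw [← tsum_mul_tsum_comm hlam.1 hlam.summable (fun i x => ((w i).2.1 x).1)
      (fun i => summable (w i)) fun i => (w i).2.2.2.le]
    simpa only [(w _).2.2.2, mul_one] using hlam.2

open Classical in
noncomputable def comb (lam : ℕ → ℝ) (w : ℕ → FreeSC X) : FreeSC X :=
  if h : IsWeight lam then ⟨combFun lam w, combFun_mem h w⟩ else w 0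

lemma comb_apply {lam : ℕ → ℝ} (hlam : IsWeight lam) (w : ℕ → FreeSC X) (x : X) :
    (comb lam w).1 x = ∑' i, lam i * (w i).1 x := by
  rw [comb, dif_pos hlam]
  rfl

lemma comb_comb {lam : ℕ → ℝ} (hlam : IsWeight lam) {mu : ℕ → ℕ → ℝ}
    (hmu : ∀ i, IsWeight (mu i)) (w : ℕ → FreeSC X) :
    comb lam (fun i => comb (mu i) w) = comb (fun j => ∑' i, lam i * mu i j) w := by
  ext x
  rw [comb_apply hlam, comb_apply (isWeight_tsum_mul hlam hmu)]
  simp only [comb_apply (hmu _)]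
  rw [tsum_mul_tsum_comm hlam.1 hlam.summable
    (fun i j => mul_nonneg ((hmu i).1 j) ((w j).2.1 x).1)
    (fun i => summable_mul_of_mem_Icc (hmu i).1 (hmu i).summable fun j => (w j).2.1 x)
    (fun i => (tsum_mul_le_tsum (hmu i).1 (hmu i).summable fun j => (w j).2.1 x).trans
      (hmu i).2.le)]
  simp_rw [← tsum_mul_right, mul_assoc]

noncomputable def superconvexStr (X : Type) : SuperconvexStr (FreeSC X) where
  comb := comb
  proj lam hlam k hk h0 w := by
    ext x
    rw [comb_apply hlam, tsum_eq_single k fun i hi => by rw [h0 i hi, zero_mul], hk, one_mul]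
  compos _ hlam _ hmu w := comb_comb hlam hmu w

lemma pair_apply {l : ℝ} (h0 : 0 ≤ l) (h1 : l ≤ 1) (a b : FreeSC X) (x : X) :
    ((superconvexStr X).pair l a b).1 x = l * a.1 x + (1 - l) * b.1 x := by
  rw [SuperconvexStr.pair]
  exact (comb_apply (isWeight_pairWeight h0 h1) _ x).trans (tsum_pairWeight_mul l _)

lemma cancellative : (superconvexStr X).Cancellative := by
  intro l hl0 hl1 a b c h
  ext x
  have hx := congrArg (fun v : FreeSC X => v.1 x) h
  simp only [pair_apply hl0.le hl1.le] at hx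
  exact mul_left_cancel₀ hl0.ne' (by linarith)

lemma iterative : (superconvexStr X).Iterative := by
  intro x y lam mu hlam hmu hsum hrec hP
  have hlam₀ : ∀ i, 0 ≤ lam i := fun i => (hlam i).1.le
  have hmu₀ : ∀ i, 0 ≤ mu i := fun i => (hmu i).1.le
  have hc : IsWeight fun i => lam i * ∏ j ∈ Finset.range i, mu j := by
    refine ⟨fun i => mul_nonneg (hlam₀ i) (Finset.prod_nonneg fun j _ => hmu₀ j), ?_⟩
    have h1 := hasSum_of_recursion (a := 1) (b := 1) (C := 1) hlam₀ hmu₀ (fun _ => zero_le_one)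
      (fun _ => by simp) (fun i => by simp [hsum i]) hP
    simpa using h1.tsum_eq
  ext t
  have ht : HasSum (fun i => lam i * (∏ j ∈ Finset.range i, mu j) * (y i).1 t) ((x 0).1 t) := by
    refine hasSum_of_recursion (C := 1) hlam₀ hmu₀ (fun i => ((y i).2.1 t).1)
      (fun i => abs_le.2 ⟨by linarith [((x i).2.1 t).1], ((x i).2.1 t).2⟩) (fun i => ?_) hP
    rw [hrec i, pair_apply (hlam i).1.le (hlam i).2.le, ← hsum i, add_sub_cancel_left]
  exact ((comb_apply hc y t).trans ht.tsum_eq).symm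

open Classical in
/-- The weights of `w` read along `e : ℕ → X`, each point being charged to the single index
`invFun e x` (so repetitions in `e` are harmless). -/
noncomputable def enumWeight (w : X → ℝ) (e : ℕ → X) (j : ℕ) : ℝ :=
  if invFun e (e j) = j then w (e j) else 0

section EnumWeight
variable {w : X → ℝ} {e e₁ e₂ : ℕ → X}

lemma enumWeight_ne_zero {j : ℕ} (h : enumWeight w e j ≠ 0) :
    invFun e (e j) = j ∧ w (e j) ≠ 0 := by
  by_contra hj
  exact h (by unfold enumWeight; split_ifs <;> simp_all)

lemma tsum_enumWeight (he : support w ⊆ range e) : ∑' j, enumWeight w e j = ∑' x, w x := by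
  have hinv : ∀ x : range e, e (invFun e x) = x := fun x => invFun_eq x.2
  have hinj : Injective fun x : range e => invFun e x := fun x y hxy =>
    Subtype.ext ((hinv x).symm.trans ((congrArg e hxy).trans (hinv y)))
  rw [← hinj.tsum_eq fun j hj => ⟨⟨e j, j, rfl⟩, (enumWeight_ne_zero hj).1⟩,
    ← tsum_subtype_eq_of_support_subset he]
  refine tsum_congr fun x => ?_
  simp [enumWeight, hinv x]

lemma enumWeight_isWeight (hw : w ∈ FreeSC X) (he : support w ⊆ range e) :
    IsWeight (enumWeight w e) :=
  ⟨fun j => by unfold enumWeight; split_ifs <;> simp [(hw.1 _).1],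
    (tsum_enumWeight he).trans hw.2.2⟩

lemma enumWeight_comb {κ : ℕ → ℝ} (hκ : IsWeight κ) (ws : ℕ → FreeSC X) :
    enumWeight (comb κ ws).1 e = fun j => ∑' i, κ i * enumWeight (ws i).1 e j := by
  funext j
  simp only [enumWeight, comb_apply hκ]
  split_ifs <;> simp

lemma comb_enumWeight_etaFree (w : FreeSC X) (he : support w.1 ⊆ range e) :
    comb (enumWeight w.1 e) (fun j => etaFree (e j)) = w := by
  classical
  ext x
  rw [comb_apply (enumWeight_isWeight w.2 he)]
  have hx : support (fun y => if y = x then w.1 y else 0) ⊆ range e :=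
    fun y hy => he fun h0 => hy (by simp [h0])
  calc ∑' j, enumWeight w.1 e j * (etaFree (e j)).1 x
      = ∑' j, enumWeight (fun y => if y = x then w.1 y else 0) e j := by
        refine tsum_congr fun j => ?_
        simp only [enumWeight, etaFree, eq_comm (a := x)]
        split_ifs <;> simp
    _ = w.1 x := by rw [tsum_enumWeight hx, tsum_ite_eq]

lemma enumWeight_eq_of_invFun_eq (h₂ : support w ⊆ range e₂) {i j : ℕ}
    (hij : invFun e₂ (e₁ i) = j) (hi : enumWeight w e₁ i ≠ 0) :
    e₂ j = e₁ i ∧ invFun e₁ (e₂ j) = i ∧ enumWeight w e₂ j = enumWeight w e₁ i := by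
  obtain ⟨hi₁, hw⟩ := enumWeight_ne_zero hi
  have hj : e₂ j = e₁ i := hij ▸ invFun_eq (h₂ hw)
  refine ⟨hj, hj ▸ hi₁, ?_⟩
  simp only [enumWeight, hj, hij, hi₁, if_true]

lemma tsum_ite_invFun_enumWeight (h₁ : support w ⊆ range e₁) (h₂ : support w ⊆ range e₂)
    (j : ℕ) :
    ∑' i, (if invFun e₂ (e₁ i) = j then enumWeight w e₁ i else 0) =
      enumWeight w e₂ j := by
  set i₀ := invFun e₁ (e₂ j) with hi₀
  rw [tsum_eq_single i₀ fun i hi => by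
    by_contra hne
    obtain ⟨hij, hwi⟩ := ite_ne_right_iff.1 hne
    exact hi (enumWeight_eq_of_invFun_eq h₂ hij hwi).2.1.symm]
  by_cases h : invFun e₂ (e₁ i₀) = j ∧ enumWeight w e₁ i₀ ≠ 0
  · rw [if_pos h.1, (enumWeight_eq_of_invFun_eq h₂ h.1 h.2).2.2]
  · have hzero : enumWeight w e₂ j = 0 := by
      by_contra hne
      obtain ⟨-, hji, hw⟩ := enumWeight_eq_of_invFun_eq h₁ hi₀.symm hne
      exact h ⟨hji, hw ▸ hne⟩
    rw [hzero]
    exact not_not.1 (mt ite_ne_right_iff.1 h)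

lemma comb_enumWeight_eq (T : SuperconvexStr Y) (g : X → Y) (hw : w ∈ FreeSC X)
    (h₁ : support w ⊆ range e₁) (h₂ : support w ⊆ range e₂) :
    T.comb (enumWeight w e₁) (fun i => g (e₁ i)) =
      T.comb (enumWeight w e₂) (fun j => g (e₂ j)) := by
  have hmove : ∀ i, enumWeight w e₁ i ≠ 0 → g (e₁ i) = g (e₂ (invFun e₂ (e₁ i))) :=
    fun i hi => by rw [(enumWeight_eq_of_invFun_eq h₂ rfl hi).1]
  rw [T.comb_congr (enumWeight_isWeight hw h₁) hmove,
    T.comb_comp (enumWeight_isWeight hw h₁) (fun i => invFun e₂ (e₁ i)) fun j => g (e₂ j)]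
  simp only [tsum_ite_invFun_enumWeight h₁ h₂]

end EnumWeight

lemma nonempty (w : FreeSC X) : Nonempty X := by
  by_contra h
  rw [not_nonempty_iff] at h
  simpa using w.2.2.2

lemma exists_subset_range (w : FreeSC X) {s : Set X} (hs : s.Countable) :
    ∃ e : ℕ → X, s ⊆ range e :=
  haveI := nonempty w
  Set.countable_iff_exists_subset_range.1 hs

noncomputable def enum (w : FreeSC X) : ℕ → X := (exists_subset_range w w.2.2.1).choose

lemma support_subset_range_enum (w : FreeSC X) : support w.1 ⊆ range (enum w) :=
  (exists_subset_range w w.2.2.1).choose_spec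

noncomputable def lift (T : SuperconvexStr Y) (f : X → Y) (w : FreeSC X) : Y :=
  T.comb (enumWeight w.1 (enum w)) fun i => f (enum w i)

variable (T : SuperconvexStr Y) (f : X → Y)

lemma lift_eq {w : FreeSC X} {e : ℕ → X} (he : support w.1 ⊆ range e) :
    lift T f w = T.comb (enumWeight w.1 e) fun i => f (e i) :=
  comb_enumWeight_eq T f w.2 (support_subset_range_enum w) he

lemma lift_etaFree (x : X) : lift T f (etaFree x) = f x := by
  have hx : support (etaFree x).1 ⊆ range fun _ : ℕ => x :=
    fun y hy => ⟨0, by_contra fun hne => hy (if_neg (Ne.symm hne))⟩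
  rw [lift_eq T f hx]
  exact T.comb_const (enumWeight_isWeight (etaFree x).2 hx) (f x)

lemma lift_isSuperaffine : IsSuperaffine (superconvexStr X) T (lift T f) := by
  intro κ hκ ws
  obtain ⟨E, hE⟩ := exists_subset_range (comb κ ws)
    ((comb κ ws).2.2.1.union (Set.countable_iUnion fun i => (ws i).2.2.1))
  have hws : ∀ i, support (ws i).1 ⊆ range E := fun i =>
    (Set.subset_iUnion (fun i => support (ws i).1) i).trans (Set.subset_union_right.trans hE)
  calc lift T f (comb κ ws)
      = T.comb (enumWeight (comb κ ws).1 E) (fun j => f (E j)) :=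
        lift_eq T f (Set.subset_union_left.trans hE)
    _ = T.comb κ (fun i => T.comb (enumWeight (ws i).1 E) fun j => f (E j)) := by
        rw [enumWeight_comb hκ, T.compos κ hκ _ fun i => enumWeight_isWeight (ws i).2 (hws i)]
    _ = T.comb κ (fun i => lift T f (ws i)) := by simp only [lift_eq T f (hws _)]

lemma eq_lift {h : FreeSC X → Y} (hh : IsSuperaffine (superconvexStr X) T h)
    (heta : ∀ x, h (etaFree x) = f x) : h = lift T f := by
  funext w
  calc h w = h ((superconvexStr X).comb (enumWeight w.1 (enum w)) fun j => etaFree (enum w j)) :=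
        congrArg h (comb_enumWeight_etaFree w (support_subset_range_enum w)).symm
    _ = T.comb (enumWeight w.1 (enum w)) fun j => h (etaFree (enum w j)) :=
        hh _ (enumWeight_isWeight w.2 (support_subset_range_enum w)) _
    _ = lift T f w := by simp only [heta, lift]

end FreeSC

/-- `FreeSC X`, with the pointwise superconvex combinations and insertion of
generators `etaFree`, is the free superconvex set over `X`; moreover it is
cancellative (and hence iterative). -/
theorem freeSC_is_free_superconvex (X : Type) :
    ∃ S : SuperconvexStr (FreeSC X),
      (∀ lam, IsWeight lam → ∀ w : ℕ → FreeSC X, ∀ x : X,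
        (S.comb lam w).1 x = ∑' i, lam i * (w i).1 x) ∧
      S.Cancellative ∧ S.Iterative ∧
      ∀ (Y : Type) (T : SuperconvexStr Y) (f : X → Y),
        ∃! h : FreeSC X → Y, IsSuperaffine S T h ∧ ∀ x : X, h (etaFree x) = f x :=
  ⟨FreeSC.superconvexStr X, fun _ hlam w x => FreeSC.comb_apply hlam w x, FreeSC.cancellative,
    FreeSC.iterative, fun _ T f => ⟨FreeSC.lift T f,
      ⟨FreeSC.lift_isSuperaffine T f, FreeSC.lift_etaFree T f⟩,
      fun _ ⟨hh, heta⟩ => FreeSC.eq_lift T f hh heta⟩⟩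
end

section
/- Let (A, m) be a set with a binary operation. Then A is iterative if and only if there exists an infinitary operation M : (ℕ → A) → A satisfying: (Unfolding) M(x₀, x₁, x₂, …) = m(x₀, M(x₁, x₂, x₃, …)) for every sequence (xᵢ); and (Canonicity) if yᵢ = m(xᵢ, y_{i+1}) for all i, then y₀ = M(x₀, x₁, x₂, …). Moreover, if A is iterative then there is exactly one operation M : (ℕ → A) → A satisfying Unfolding. -/
/-- The unfolding property of an infinitary operation `M` with respect to `m`. -/
def Unfolding {A : Type} (m : A → A → A) (M : (ℕ → A) → A) : Prop :=
  ∀ x : ℕ → A, M x = m (x 0) (M fun i => x (i + 1))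

/-- The canonicity property of an infinitary operation `M` with respect to `m`. -/
def Canonicity {A : Type} (m : A → A → A) (M : (ℕ → A) → A) : Prop :=
  ∀ x y : ℕ → A, (∀ i, y i = m (x i) (y (i + 1))) → y 0 = M x


/-!
Streams `ℕ → A` with head and tail form the final coalgebra of `X ↦ A × X`. The unfolding
equation for `M` is exactly the solution equation of this stream coalgebra, and every coalgebra
`c : X → A × X` maps into it by sending a state to its stream of outputs. Hence an unfolding `M`
yields the solution `M ∘ outputStream c` for every `c`; canonicity says this is the only solution,
and conversely canonicity is the uniqueness of solutions for the coalgebra `i ↦ (x i, i + 1)`.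
-/

def outputStream {A X : Type} (c : X → A × X) (x : X) (n : ℕ) : A :=
  (c ((Prod.snd ∘ c)^[n] x)).1

lemma outputStream_zero {A X : Type} (c : X → A × X) (x : X) :
    outputStream c x 0 = (c x).1 :=
  rfl

lemma outputStream_tail {A X : Type} (c : X → A × X) (x : X) :
    (fun n => outputStream c x (n + 1)) = outputStream c (c x).2 := by
  funext n
  simp only [outputStream, Function.iterate_succ_apply, Function.comp_apply]

lemma Unfolding.solves_outputStream {A X : Type} {m : A → A → A} {M : (ℕ → A) → A}
    (hM : Unfolding m M) (c : X → A × X) (x : X) :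
    M (outputStream c x) = m (c x).1 (M (outputStream c (c x).2)) := by
  rw [hM, outputStream_zero, outputStream_tail]

lemma Iterative.existsUnique_unfolding {A : Type} {m : A → A → A} (h : Iterative m) :
    ∃! M : (ℕ → A) → A, Unfolding m M :=
  h (ℕ → A) fun x => (x 0, fun i => x (i + 1))

lemma Iterative.canonicity {A : Type} {m : A → A → A} {M : (ℕ → A) → A} (h : Iterative m)
    (hM : Unfolding m M) : Canonicity m M := by
  intro x y hy
  let c : ℕ → A × ℕ := fun i => (x i, i + 1)
  have hy_eq : y = fun i => M (outputStream c i) := (h ℕ c).unique hy (hM.solves_outputStream c)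
  have hx : outputStream c 0 = x := by
    funext n
    show x (Nat.succ^[n] 0) = x n
    rw [Nat.succ_iterate, zero_add]
  rw [hy_eq]
  exact congrArg M hx

lemma Iterative.of_unfolding_canonicity {A : Type} {m : A → A → A} {M : (ℕ → A) → A}
    (hM : Unfolding m M) (hC : Canonicity m M) : Iterative m := by
  intro X c
  refine ⟨fun x => M (outputStream c x), hM.solves_outputStream c, fun v hv => ?_⟩
  funext x
  refine hC _ (fun n => v ((Prod.snd ∘ c)^[n] x)) fun n => ?_
  rw [Function.iterate_succ_apply']
  exact hv _

/-- A binary operation is iterative iff it admits an infinitary operation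
satisfying unfolding and canonicity; moreover, if it is iterative, the
operation satisfying unfolding is unique. -/
theorem iterative_iff_unfolding_canonicity (A : Type) (m : A → A → A) :
    (Iterative m ↔ ∃ M : (ℕ → A) → A, Unfolding m M ∧ Canonicity m M) ∧
    (Iterative m → ∃! M : (ℕ → A) → A, Unfolding m M) := by
  refine ⟨⟨fun h => ?_, fun ⟨_, hM, hC⟩ => Iterative.of_unfolding_canonicity hM hC⟩,
    Iterative.existsUnique_unfolding⟩
  obtain ⟨M, hM, -⟩ := h.existsUnique_unfolding
  exact ⟨M, hM, h.canonicity hM⟩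
end

section
/- Let (A, m) and (A', m') be iterative midpoint sets, and let M : (ℕ → A) → A and M' : (ℕ → A') → A' be their unique associated infinitary operations satisfying the unfolding equation. Then every midpoint homomorphism f : A → A' is also a homomorphism with respect to the infinitary operations: f(M(x₀, x₁, x₂, …)) = M'(f(x₀), f(x₁), f(x₂), …) for every sequence (xᵢ) in A. -/
theorem Iterative.eq_of_corec {A : Type} {m : A → A → A} (hit : Iterative m) {X : Type}
    (c : X → A × X) {u v : X → A} (hu : ∀ x, u x = m (c x).1 (u (c x).2))
    (hv : ∀ x, v x = m (c x).1 (v (c x).2)) : u = v :=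
  (hit X c).unique hu hv

theorem hom_preserves_infinitary_general (A A' : Type) (m : A → A → A) (m' : A' → A' → A')
    (hit' : Iterative m')
    (M : (ℕ → A) → A) (M' : (ℕ → A') → A')
    (hM : Unfolding m M) (hM' : Unfolding m' M')
    (f : A → A') (hf : ∀ x y, f (m x y) = m' (f x) (f y)) :
    ∀ x : ℕ → A, f (M x) = M' (fun i => f (x i)) := by
  -- Both sides solve the corecursion of `m'` along `x ↦ (f (x 0), tail of x)`.
  let c : (ℕ → A) → A' × (ℕ → A) := fun x => (f (x 0), fun i => x (i + 1))
  have hlhs : ∀ x, f (M x) = m' (c x).1 (f (M (c x).2)) := fun x => by rw [hM x, hf]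
  have hrhs : ∀ x, M' (fun i => f (x i)) = m' (c x).1 (M' fun i => f ((c x).2 i)) :=
    fun x => hM' _
  exact congrFun (hit'.eq_of_corec c hlhs hrhs)

/-- A midpoint homomorphism between iterative midpoint sets is also a
homomorphism with respect to the associated infinitary operations. -/
theorem hom_preserves_infinitary (A A' : Type) (m : A → A → A) (m' : A' → A' → A')
    (hm : IsMidpoint m) (hm' : IsMidpoint m')
    (hit : Iterative m) (hit' : Iterative m')
    (M : (ℕ → A) → A) (M' : (ℕ → A') → A')
    (hM : Unfolding m M) (hM' : Unfolding m' M')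
    (f : A → A') (hf : ∀ x y, f (m x y) = m' (f x) (f y)) :
    ∀ x : ℕ → A, f (M x) = M' (fun i => f (x i)) :=
  hom_preserves_infinitary_general A A' m m' hit' M M' hM hM' f hf
end

section
/- Every cancellative supermidpoint set is a midpoint-convex body under its associated binary operation: if (A, M) is a supermidpoint set whose associated binary operation m(x,y) = M(x,y,y,y,…) is cancellative, then m satisfies the midpoint axioms (idempotency, commutativity, transposition) and is iterative; in particular M satisfies canonicity: if yᵢ = m(xᵢ, y_{i+1}) for all i, then y₀ = M(x₀, x₁, x₂, …). -/
/-- A supermidpoint structure on `A`: an infinitary operation satisfying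
idempotency, commutativity, transposition and unfolding. -/
structure SupermidpointStr (A : Type) where
  M : (ℕ → A) → A
  idem : ∀ x : A, M (fun _ => x) = x
  comm : ∀ x y : A, M (fun i => if i = 0 then x else y) = M (fun i => if i = 0 then y else x)
  transp : ∀ x : ℕ → ℕ → A,
    M (fun i => M (fun j => x i j)) = M (fun j => M (fun i => x i j))
  unfoldAx : ∀ x : ℕ → A,
    M x = M (fun i => if i = 0 then x 0 else M (fun j => x (j + 1)))

/-- The binary operation associated with a supermidpoint structure:
`m(x,y) = M(x,y,y,y,…)`. -/
def SupermidpointStr.mid {A : Type} (S : SupermidpointStr A) (x y : A) : A :=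
  S.M (fun i => if i = 0 then x else y)

theorem iterative_of_unfolding_of_canonicity {A : Type} {m : A → A → A} {M : (ℕ → A) → A}
    (hU : Unfolding m M) (hC : Canonicity m M) : Iterative m := by
  intro X c
  obtain ⟨a, b, rfl⟩ : ∃ (a : X → A) (b : X → X), c = fun x => (a x, b x) :=
    ⟨_, _, rfl⟩
  refine ⟨fun x => M fun i => a (b^[i] x), fun x => ?_, fun v hv => funext fun x => ?_⟩
  · simpa only [Function.iterate_succ_apply, Function.iterate_zero_apply]
      using hU fun i => a (b^[i] x)
  · refine hC _ (fun i => v (b^[i] x)) fun i => ?_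
    simpa only [Function.iterate_succ_apply'] using hv (b^[i] x)

namespace SupermidpointStr

variable {A : Type} (S : SupermidpointStr A)

theorem mid_self (x : A) : S.mid x x = x := by
  simpa only [mid, ite_self] using S.idem x

theorem mid_comm (x y : A) : S.mid x y = S.mid y x := S.comm x y

theorem unfolding : Unfolding S.mid S.M := S.unfoldAx

theorem M_mid (a b : ℕ → A) :
    S.M (fun i => S.mid (a i) (b i)) = S.mid (S.M a) (S.M b) := by
  have hcols : (fun j => S.M fun i => if j = 0 then a i else b i)
      = fun j => if j = 0 then S.M a else S.M b := by
    funext j; split <;> rfl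
  exact (S.transp fun i j => if j = 0 then a i else b i).trans (congrArg S.M hcols)

theorem mid_mid_mid_comm (x y z w : A) :
    S.mid (S.mid x y) (S.mid z w) = S.mid (S.mid x z) (S.mid y w) := by
  have hrows : (fun i : ℕ => S.mid (if i = 0 then x else y) (if i = 0 then z else w))
      = fun i => if i = 0 then S.mid x z else S.mid y w := by
    funext i; split <;> rfl
  exact (S.M_mid _ _).symm.trans (congrArg S.M hrows)

theorem isMidpoint : IsMidpoint S.mid := ⟨S.mid_self, S.mid_comm, S.mid_mid_mid_comm⟩

theorem canonicity (hc : Cancellative S.mid) : Canonicity S.mid S.M := by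
  intro x y hy
  have hdist : S.M y = S.mid (S.M x) (S.M fun i => y (i + 1)) :=
    (congrArg S.M (funext hy)).trans (S.M_mid _ _)
  have hunfold : S.M y = S.mid (y 0) (S.M fun i => y (i + 1)) := S.unfolding y
  refine hc (S.M fun i => y (i + 1)) _ _ ?_
  rw [S.mid_comm _ (y 0), S.mid_comm _ (S.M x), ← hunfold, ← hdist]

end SupermidpointStr

/-- Every cancellative supermidpoint set is a midpoint-convex body under the
associated binary operation; in particular `M` satisfies canonicity. -/
theorem cancellative_supermidpoint_is_mconvex_body (A : Type) (S : SupermidpointStr A)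
    (hc : Cancellative S.mid) :
    IsMidpoint S.mid ∧ Iterative S.mid ∧ Canonicity S.mid S.M :=
  ⟨S.isMidpoint,
    iterative_of_unfolding_of_canonicity S.unfolding (S.canonicity hc), S.canonicity hc⟩
end

section
/- Let I be a set and λ : I → [0,1] a function with Σ_{i∈I} λᵢ = 1 (so the support of λ is countable). Then there exist functions ρ, μ : I → [0,1] such that: ρ takes dyadic rational values and has finite support with Σ_{i∈I} ρᵢ = 1; Σ_{i∈I} μᵢ = 1; and λᵢ = ½ρᵢ + ½μᵢ for all i ∈ I. -/
/-! Round `lam` down to `d = ⌊2ⁿ lam⌋ / 2ⁿ`, which is finitely supported since `lam` is summable,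
and put the missing mass `δ = 1 - ∑ d` on an index `i₀` with `lam i₀ > 0`. By dominated
convergence `δ → 0` as `n → ∞`, so we may take `δ ≤ lam i₀`. The resulting `ρ` satisfies
`2 lam - 1 ≤ ρ ≤ 2 lam`, i.e. `0 ≤ μ ≤ 1` for `μ = 2 lam - ρ`: at `i₀` because
`lam i₀ ≤ ρ i₀ ≤ lam i₀ + δ`, elsewhere because `lam i - δ ≤ d i ≤ lam i` and `lam i + lam i₀ ≤ 1`. -/
open Filter Topology Function

noncomputable def dyadicFloor (n : ℕ) (x : ℝ) : ℝ := ⌊2 ^ n * x⌋ / 2 ^ n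

section DyadicFloor

variable (n : ℕ)

theorem dyadicFloor_le (x : ℝ) : dyadicFloor n x ≤ x := by
  rw [dyadicFloor, div_le_iff₀ (by positivity), mul_comm]
  exact Int.floor_le _

theorem sub_inv_two_pow_lt_dyadicFloor (x : ℝ) : x - (2 ^ n)⁻¹ < dyadicFloor n x := by
  have h := Int.lt_floor_add_one (2 ^ n * x)
  rw [dyadicFloor, lt_div_iff₀ (by positivity), sub_mul, inv_mul_cancel₀ (by positivity)]
  linarith

theorem dyadicFloor_nonneg {x : ℝ} (hx : 0 ≤ x) : 0 ≤ dyadicFloor n x := by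
  unfold dyadicFloor
  have : (0 : ℤ) ≤ ⌊2 ^ n * x⌋ := Int.floor_nonneg.mpr (by positivity)
  positivity

theorem dyadicFloor_mem_zmultiples (x : ℝ) :
    dyadicFloor n x ∈ AddSubgroup.zmultiples ((2 : ℝ) ^ n)⁻¹ :=
  AddSubgroup.mem_zmultiples_iff.mpr
    ⟨⌊2 ^ n * x⌋, by rw [zsmul_eq_mul, dyadicFloor, div_eq_mul_inv]⟩

theorem dyadicFloor_eq_zero_of_lt {x : ℝ} (hx : 0 ≤ x) (h : x < (2 ^ n)⁻¹) :
    dyadicFloor n x = 0 := by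
  have : ⌊2 ^ n * x⌋ = 0 := by
    rw [Int.floor_eq_zero_iff]
    constructor
    · positivity
    · rwa [← lt_inv_mul_iff₀ (by positivity), mul_one]
  simp [dyadicFloor, this]

theorem tendsto_dyadicFloor (x : ℝ) : Tendsto (fun n ↦ dyadicFloor n x) atTop (𝓝 x) := by
  have h : Tendsto (fun n : ℕ ↦ x - ((2 : ℝ) ^ n)⁻¹) atTop (𝓝 x) := by
    simpa using (tendsto_const_nhds (x := x)).sub (tendsto_inv_atTop_zero.comp
      (tendsto_pow_atTop_atTop_of_one_lt (one_lt_two (α := ℝ))))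
  exact tendsto_of_tendsto_of_tendsto_of_le_of_le h tendsto_const_nhds
    (fun n ↦ (sub_inv_two_pow_lt_dyadicFloor n x).le) (fun n ↦ dyadicFloor_le n x)

end DyadicFloor

section Weights

variable {I : Type*} {lam : I → ℝ}

theorem finite_support_dyadicFloor (h0 : ∀ i, 0 ≤ lam i) (hs : Summable lam) (n : ℕ) :
    (support fun i ↦ dyadicFloor n (lam i)).Finite := by
  have hsmall := hs.tendsto_cofinite_zero.eventually
    (gt_mem_nhds (by positivity : (0 : ℝ) < (2 ^ n)⁻¹))
  exact (eventually_cofinite.mp hsmall).subset fun i hi hlt ↦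
    hi (dyadicFloor_eq_zero_of_lt n (h0 i) hlt)

theorem tendsto_tsum_dyadicFloor (h0 : ∀ i, 0 ≤ lam i) (hs : Summable lam) :
    Tendsto (fun n ↦ ∑' i, dyadicFloor n (lam i)) atTop (𝓝 (∑' i, lam i)) :=
  tendsto_tsum_of_dominated_convergence hs (fun i ↦ tendsto_dyadicFloor (lam i))
    (Eventually.of_forall fun n i ↦ by
      rw [Real.norm_of_nonneg (dyadicFloor_nonneg n (h0 i))]
      exact dyadicFloor_le n (lam i))

end Weights

section TopUp

variable {I : Type*} [DecidableEq I] (d : I → ℝ) (i₀ : I)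

noncomputable def topUp : I → ℝ := update d i₀ (d i₀ + (1 - ∑' i, d i))

theorem topUp_self : topUp d i₀ i₀ = d i₀ + (1 - ∑' i, d i) := update_self ..

theorem topUp_of_ne {i : I} (h : i ≠ i₀) : topUp d i₀ i = d i := update_of_ne h ..

theorem support_topUp_subset : support (topUp d i₀) ⊆ insert i₀ (support d) := by
  intro i hi
  by_cases h : i = i₀
  · exact .inl h
  · exact .inr (by rwa [mem_support, ← topUp_of_ne d i₀ h])

variable {d}

theorem hasSum_topUp (hd : Summable d) : HasSum (topUp d i₀) 1 := by
  have := hd.hasSum.update i₀ (d i₀ + (1 - ∑' i, d i))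
  rwa [add_sub_cancel_left, sub_add_cancel] at this

theorem topUp_mem_of_forall_mem {G : AddSubgroup ℝ} (hG : 1 ∈ G) (hd : ∀ i, d i ∈ G)
    (hfin : (support d).Finite) (i : I) : topUp d i₀ i ∈ G := by
  by_cases h : i = i₀
  · subst h
    rw [topUp_self, tsum_eq_sum' hfin.coe_toFinset.ge]
    exact G.add_mem (hd i) (G.sub_mem hG (G.sum_mem fun j _ ↦ hd j))
  · exact topUp_of_ne d i₀ h ▸ hd i

end TopUp

section Bounds

variable {I : Type*} {lam d : I → ℝ}

theorem tsum_sub_apply_le_of_le (h : ∀ i, d i ≤ lam i) (hd : Summable d) (hlam : Summable lam)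
    (i : I) : ∑' j, d j - d i ≤ ∑' j, lam j - lam i := by
  classical
  have := hasSum_le (fun j ↦ ?_) (hd.hasSum.update i (lam i)) hlam.hasSum
  · linarith
  · by_cases hj : j = i
    · subst hj; simp
    · simp [hj, h j]

theorem add_le_tsum_of_ne (h0 : ∀ i, 0 ≤ lam i) (hs : Summable lam) {i j : I} (hij : i ≠ j) :
    lam i + lam j ≤ ∑' k, lam k := by
  classical
  simpa [Finset.sum_pair hij] using hs.sum_le_tsum {i, j} (fun k _ ↦ h0 k)

variable [DecidableEq I] {i₀ : I}

theorem topUp_nonneg (hlam : HasSum lam 1) (hd0 : ∀ i, 0 ≤ d i) (hd : ∀ i, d i ≤ lam i)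
    (i : I) : 0 ≤ topUp d i₀ i := by
  by_cases h : i = i₀
  · subst h
    have := hasSum_le hd (Summable.of_nonneg_of_le hd0 hd hlam.summable).hasSum hlam
    linarith [topUp_self d i, hd0 i]
  · exact topUp_of_ne d i₀ h ▸ hd0 i

theorem topUp_le_one (h0 : ∀ i, 0 ≤ lam i) (hlam : HasSum lam 1) (hd0 : ∀ i, 0 ≤ d i)
    (hd : ∀ i, d i ≤ lam i) (i : I) : topUp d i₀ i ≤ 1 := by
  by_cases h : i = i₀
  · subst h
    have := (Summable.of_nonneg_of_le hd0 hd hlam.summable).le_tsum i fun j _ ↦ hd0 j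
    linarith [topUp_self d i]
  · rw [topUp_of_ne d i₀ h]
    exact (hd i).trans (le_hasSum hlam i fun j _ ↦ h0 j)

theorem topUp_le_two_mul (h0 : ∀ i, 0 ≤ lam i) (hd : ∀ i, d i ≤ lam i)
    (hdef : 1 - ∑' i, d i ≤ lam i₀) (i : I) : topUp d i₀ i ≤ 2 * lam i := by
  by_cases h : i = i₀
  · subst h
    linarith [topUp_self d i, hd i]
  · linarith [topUp_of_ne d i₀ h, hd i, h0 i]

theorem two_mul_sub_one_le_topUp (h0 : ∀ i, 0 ≤ lam i) (hlam : HasSum lam 1)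
    (hd0 : ∀ i, 0 ≤ d i) (hd : ∀ i, d i ≤ lam i) (hdef : 1 - ∑' i, d i ≤ lam i₀) (i : I) :
    2 * lam i - 1 ≤ topUp d i₀ i := by
  have hd_ge : ∑' j, d j - d i ≤ 1 - lam i := hlam.tsum_eq ▸
    tsum_sub_apply_le_of_le hd (.of_nonneg_of_le hd0 hd hlam.summable) hlam.summable i
  by_cases h : i = i₀
  · subst h
    linarith [topUp_self d i, le_hasSum hlam i fun j _ ↦ h0 j]
  · have := hlam.tsum_eq ▸ add_le_tsum_of_ne h0 hlam.summable h
    linarith [topUp_of_ne d i₀ h]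

end Bounds

theorem exists_eq_intCast_div_two_pow_of_mem_zmultiples {n : ℕ} {x : ℝ}
    (hx : x ∈ AddSubgroup.zmultiples ((2 : ℝ) ^ n)⁻¹) : ∃ a : ℤ, x = a / 2 ^ n := by
  obtain ⟨a, rfl⟩ := AddSubgroup.mem_zmultiples_iff.mp hx
  exact ⟨a, by rw [zsmul_eq_mul, div_eq_mul_inv]⟩

theorem weight_dyadic_split_general (I : Type) (lam : I → ℝ)
    (h0 : ∀ i, 0 ≤ lam i)
    (hsum : ∑' i, lam i = 1) :
    ∃ rho mu : I → ℝ,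
      (∀ i, 0 ≤ rho i ∧ rho i ≤ 1) ∧
      (∀ i, ∃ (a : ℤ) (n : ℕ), rho i = (a : ℝ) / 2 ^ n) ∧
      (Function.support rho).Finite ∧
      (∑' i, rho i) = 1 ∧
      (∀ i, 0 ≤ mu i ∧ mu i ≤ 1) ∧
      (∑' i, mu i) = 1 ∧
      ∀ i, lam i = rho i / 2 + mu i / 2 := by
  classical
  have hs : Summable lam := by
    by_contra h
    simp [tsum_eq_zero_of_not_summable h] at hsum
  have hlam : HasSum lam 1 := hsum ▸ hs.hasSum
  obtain ⟨i₀, hi₀⟩ : ∃ i, 0 < lam i := by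
    by_contra! h
    simp [fun i ↦ le_antisymm (h i) (h0 i)] at hsum
  obtain ⟨n, hn⟩ : ∃ n, 1 - lam i₀ ≤ ∑' i, dyadicFloor n (lam i) :=
    ((tendsto_tsum_dyadicFloor h0 hs).eventually_const_le (by linarith)).exists
  set d := fun i ↦ dyadicFloor n (lam i)
  have hd0 i : 0 ≤ d i := dyadicFloor_nonneg n (h0 i)
  have hd i : d i ≤ lam i := dyadicFloor_le n (lam i)
  have hdef : 1 - ∑' i, d i ≤ lam i₀ := by linarith
  have hds : Summable d := .of_nonneg_of_le hd0 hd hs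
  refine ⟨topUp d i₀, fun i ↦ 2 * lam i - topUp d i₀ i,
    fun i ↦ ⟨topUp_nonneg hlam hd0 hd i, topUp_le_one h0 hlam hd0 hd i⟩, fun i ↦ ?_,
    ((finite_support_dyadicFloor h0 hs n).insert i₀).subset (support_topUp_subset d i₀),
    (hasSum_topUp i₀ hds).tsum_eq, fun i ↦ ?_, ?_, fun i ↦ by ring⟩
  · obtain ⟨a, ha⟩ := exists_eq_intCast_div_two_pow_of_mem_zmultiples <|
      topUp_mem_of_forall_mem i₀ (AddSubgroup.mem_zmultiples_iff.mpr ⟨2 ^ n, by simp⟩)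
        (fun j ↦ dyadicFloor_mem_zmultiples n (lam j)) (finite_support_dyadicFloor h0 hs n) i
    exact ⟨a, n, ha⟩
  · constructor <;> linarith [topUp_le_two_mul (i₀ := i₀) h0 hd hdef i,
      two_mul_sub_one_le_topUp h0 hlam hd0 hd hdef i]
  · rw [(hs.mul_left 2).tsum_sub (hasSum_topUp i₀ hds).summable, tsum_mul_left, hsum,
      (hasSum_topUp i₀ hds).tsum_eq]
    norm_num

/-- Every countable weight function `λ : I → [0,1]` with total sum 1 splits as
`λ = ½ρ + ½μ` where `ρ` is a finitely supported dyadic weight function and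
`μ` is a weight function. -/
theorem weight_dyadic_split (I : Type) (lam : I → ℝ)
    (h0 : ∀ i, 0 ≤ lam i) (h1 : ∀ i, lam i ≤ 1)
    (hsum : ∑' i, lam i = 1) :
    ∃ rho mu : I → ℝ,
      (∀ i, 0 ≤ rho i ∧ rho i ≤ 1) ∧
      (∀ i, ∃ (a : ℤ) (n : ℕ), rho i = (a : ℝ) / 2 ^ n) ∧
      (Function.support rho).Finite ∧
      (∑' i, rho i) = 1 ∧
      (∀ i, 0 ≤ mu i ∧ mu i ≤ 1) ∧
      (∑' i, mu i) = 1 ∧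
      ∀ i, lam i = rho i / 2 + mu i / 2 :=
  weight_dyadic_split_general I lam h0 hsum
end
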